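/- arXiv:1909.03052 — 3 statements merged into one kernel-verified Lean document; each statement's English description precedes it below -/
import Mathlib

section
/- Let (X,d) be a metric space, m ≥ 1, and let φ : X^m → X satisfy d(φ(x_0,...,x_{m−1}), φ(y_0,...,y_{m−1})) ≤ Σ_{i=0}^{m−1} a_i · d(x_i, y_i) for all points, where a_0, ..., a_{m−1} ≥ 0. Then for every 1-Lipschitz f : X → ℝ and all compactly supported Borel probability measures μ_0, ..., μ_{m−1}, ν_0, ..., ν_{m−1} on X: |∫_{X^m} f∘φ d(μ_0 × ... × μ_{m−1}) − ∫_{X^m} f∘φ d(ν_0 × ... × ν_{m−1})| ≤ Σ_{i=0}^{m−1} a_i · d_MK(μ_i, ν_i), where μ_0 × ... × μ_{m−1} denotes the product measure. -/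
open MeasureTheory

/-- The Monge–Kantorovich (Hutchinson) distance between two measures. -/
noncomputable def dMK {X : Type*} [MetricSpace X] [MeasurableSpace X]
    (μ ν : Measure X) : ℝ :=
  sSup {s : ℝ | ∃ f : X → ℝ, LipschitzWith 1 f ∧ s = |∫ x, f x ∂μ - ∫ x, f x ∂ν|}

/-!
Change the measures one coordinate at a time. Splitting off the first factor of the product
by Fubini, the inner integral `x ↦ ∫ f (φ (x, y)) dy` is `a₀`-Lipschitz, so replacing `μ₀` by
`ν₀` costs at most `a₀ · d_MK(μ₀, ν₀)`; replacing the remaining measures costs at most the rest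
of the sum, by induction applied to each slice `y ↦ f (φ (x, y))`.

The product σ-algebra on `Xᵐ` can be strictly smaller than the Borel one, so `f ∘ φ` need not be
measurable for it. It is therefore first replaced by the infimum of the cones
`p ↦ f (φ p) + ∑ aᵢ d(zᵢ, pᵢ)` over a countable dense subset of the compact support: a
countable infimum of measurable functions, Lipschitz for the same weighted distance, and equal
to `f ∘ φ` on the support.
-/

open Set Filter Function TopologicalSpace
open scoped NNReal

theorem ContinuousOn.integrable_of_ae_mem {α E : Type*} [TopologicalSpace α] [MeasurableSpace α]
    [NormedAddCommGroup E] {μ : Measure α} [IsFiniteMeasure μ] {S : Set α} {g : α → E}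
    (hg : ContinuousOn g S) (hS : IsCompact S) (hgm : AEStronglyMeasurable g μ)
    (hμS : ∀ᵐ x ∂μ, x ∈ S) : Integrable g μ := by
  obtain ⟨C, hC⟩ := hS.exists_bound_of_continuousOn hg
  exact (integrable_const C).mono' hgm (hμS.mono hC)

theorem ae_mem_univ_pi {ι : Type*} [Fintype ι] {X : ι → Type*} [∀ i, MeasurableSpace (X i)]
    {μ : ∀ i, Measure (X i)} [∀ i, SigmaFinite (μ i)] {S : ∀ i, Set (X i)}
    (h : ∀ i, ∀ᵐ x ∂μ i, x ∈ S i) : ∀ᵐ z ∂Measure.pi μ, z ∈ univ.pi S := by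
  filter_upwards [ae_all_iff.2 fun i => Measure.tendsto_eval_ae_ae.eventually (h i)] with z hz
  exact fun i _ => hz i

theorem measurable_fin_cons {n : ℕ} {X : Type*} [MeasurableSpace X] (x : X) :
    Measurable (fun y : Fin n → X => (Fin.cons x y : Fin (n + 1) → X)) :=
  measurable_pi_iff.2 fun i => Fin.cases measurable_const (fun j => measurable_pi_apply j) i

theorem integral_pi_fin_succ {n : ℕ} {X E : Type*} [MeasurableSpace X] [NormedAddCommGroup E]
    [NormedSpace ℝ E] {μ : Fin (n + 1) → Measure X} [∀ i, SigmaFinite (μ i)]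
    {g : (Fin (n + 1) → X) → E} (hg : Integrable g (Measure.pi μ)) :
    ∫ z, g z ∂Measure.pi μ =
      ∫ x, ∫ y, g (Fin.cons x y) ∂Measure.pi (fun i => μ i.succ) ∂μ 0 := by
  have mp := (measurePreserving_piFinSuccAbove μ 0).symm
  rw [← mp.integral_comp', integral_prod]
  · simp only [MeasurableEquiv.piFinSuccAbove_symm_apply, Fin.insertNthEquiv, Equiv.coe_fn_mk,
      Fin.insertNth_zero', Fin.zero_succAbove]
  · exact (mp.integrable_comp_emb (MeasurableEquiv.measurableEmbedding _)).2 hg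

section MongeKantorovich

variable {X : Type*} [MetricSpace X] [MeasurableSpace X] [OpensMeasurableSpace X]
  {μ ν : Measure X} [IsProbabilityMeasure μ] [IsProbabilityMeasure ν] {S : Set X}
  {K : ℝ≥0} {f : X → ℝ}

theorem LipschitzWith.integrable_of_ae_mem (hf : LipschitzWith K f) (hS : IsCompact S)
    (hμ : ∀ᵐ x ∂μ, x ∈ S) : Integrable f μ :=
  hf.continuous.continuousOn.integrable_of_ae_mem hS hf.continuous.aestronglyMeasurable hμ

theorem LipschitzWith.abs_integral_sub_le (hf : LipschitzWith K f) (hS : IsCompact S)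
    (hμ : ∀ᵐ x ∂μ, x ∈ S) {x₀ : X} {R : ℝ} (hR : S ⊆ Metric.closedBall x₀ R) :
    |∫ x, f x ∂μ - f x₀| ≤ K * R := by
  have hint := hf.integrable_of_ae_mem hS hμ
  calc |∫ x, f x ∂μ - f x₀| = ‖∫ x, (f x - f x₀) ∂μ‖ := by
        rw [integral_sub hint (integrable_const _), integral_const, probReal_univ, one_smul,
          Real.norm_eq_abs]
    _ ≤ K * R * μ.real univ := norm_integral_le_of_norm_le_const <| hμ.mono fun x hx => by
        rw [← dist_eq_norm]
        exact (hf.dist_le_mul x x₀).trans (by gcongr; exact hR hx)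
    _ = K * R := by rw [probReal_univ, mul_one]

theorem abs_integral_sub_le_dMK (hS : IsCompact S) (hμ : ∀ᵐ x ∂μ, x ∈ S)
    (hν : ∀ᵐ x ∂ν, x ∈ S) (hf : LipschitzWith 1 f) :
    |∫ x, f x ∂μ - ∫ x, f x ∂ν| ≤ dMK μ ν := by
  obtain ⟨x₀⟩ := nonempty_of_isProbabilityMeasure μ
  obtain ⟨R, hR⟩ := hS.isBounded.subset_closedBall x₀
  -- the defining set is bounded, so `dMK` is a genuine supremum rather than the junk `sSup`
  refine le_csSup ⟨2 * R, ?_⟩ ⟨f, hf, rfl⟩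
  rintro _ ⟨g, hg, rfl⟩
  have hgμ := hg.abs_integral_sub_le hS hμ hR
  have hgν := hg.abs_integral_sub_le hS hν hR
  rw [NNReal.coe_one, one_mul, abs_le] at hgμ hgν
  rw [abs_le]
  constructor <;> linarith [hgμ.1, hgμ.2, hgν.1, hgν.2]

theorem LipschitzWith.abs_integral_sub_le_mul_dMK (hf : LipschitzWith K f) (hS : IsCompact S)
    (hμ : ∀ᵐ x ∂μ, x ∈ S) (hν : ∀ᵐ x ∂ν, x ∈ S) :
    |∫ x, f x ∂μ - ∫ x, f x ∂ν| ≤ K * dMK μ ν := by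
  rcases eq_or_ne K 0 with rfl | hK
  · obtain ⟨x₀⟩ := nonempty_of_isProbabilityMeasure μ
    have : f = fun _ => f x₀ :=
      funext fun x => dist_le_zero.1 (by simpa using hf.dist_le_mul x x₀)
    rw [this]
    simp
  · have hK : (0 : ℝ) < K := NNReal.coe_pos.2 (pos_iff_ne_zero.2 hK)
    have hf' : LipschitzWith 1 (fun x => (K : ℝ)⁻¹ * f x) := LipschitzWith.of_dist_le_mul
      fun x y => by
        rw [Real.dist_eq, ← mul_sub, abs_mul, abs_inv, abs_of_pos hK, ← Real.dist_eq,
          NNReal.coe_one, one_mul, inv_mul_le_iff₀ hK]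
        exact hf.dist_le_mul x y
    have := abs_integral_sub_le_dMK hS hμ hν hf'
    rwa [integral_const_mul, integral_const_mul, ← mul_sub, abs_mul, abs_inv, abs_of_pos hK,
      inv_mul_le_iff₀ hK] at this

end MongeKantorovich

def WeightedLipschitzWith {ι X Y : Type*} [Fintype ι] [PseudoMetricSpace X] [PseudoMetricSpace Y]
    (a : ι → ℝ≥0) (g : (ι → X) → Y) : Prop :=
  ∀ z w, dist (g z) (g w) ≤ ∑ i, a i * dist (z i) (w i)

namespace WeightedLipschitzWith

variable {ι X Y : Type*} [Fintype ι] [PseudoMetricSpace X] [PseudoMetricSpace Y] {a : ι → ℝ≥0}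

theorem lipschitzWith {g : (ι → X) → Y} (hg : WeightedLipschitzWith a g) :
    LipschitzWith (∑ i, a i) g :=
  LipschitzWith.of_dist_le_mul fun z w => calc
    dist (g z) (g w) ≤ ∑ i, a i * dist (z i) (w i) := hg z w
    _ ≤ ∑ i, a i * dist z w := by gcongr with i; exact dist_le_pi_dist z w i
    _ = ↑(∑ i, a i) * dist z w := by push_cast; rw [Finset.sum_mul]

protected theorem continuous {g : (ι → X) → Y} (hg : WeightedLipschitzWith a g) :
    Continuous g :=
  hg.lipschitzWith.continuous

theorem _root_.LipschitzWith.comp_weightedLipschitzWith {Z : Type*} [PseudoMetricSpace Z]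
    {K : ℝ≥0} {f : Y → Z} {g : (ι → X) → Y} (hf : LipschitzWith K f)
    (hg : WeightedLipschitzWith a g) : WeightedLipschitzWith (K • a) (f ∘ g) :=
  fun z w => calc
    dist (f (g z)) (f (g w)) ≤ K * dist (g z) (g w) := hf.dist_le_mul _ _
    _ ≤ K * ∑ i, a i * dist (z i) (w i) := by gcongr; exact hg z w
    _ = ∑ i, (K • a) i * dist (z i) (w i) := by simp [Finset.mul_sum, mul_assoc]

theorem le_add_sum {g : (ι → X) → ℝ} (hg : WeightedLipschitzWith a g) (z w : ι → X) :
    g z ≤ g w + ∑ i, a i * dist (z i) (w i) := by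
  linarith [le_abs_self (g z - g w), Real.dist_eq (g z) (g w) ▸ hg z w]

theorem exists_measurable_eqOn [MeasurableSpace X] [OpensMeasurableSpace X]
    {g : (ι → X) → ℝ} (hg : WeightedLipschitzWith a g) {T : Set (ι → X)} (hT : IsSeparable T)
    (hne : T.Nonempty) : ∃ h, Measurable h ∧ WeightedLipschitzWith a h ∧ EqOn h g T := by
  obtain ⟨c, -, hc, hTc⟩ := hT.exists_countable_dense_subset
  have : Nonempty c := (closure_nonempty_iff.1 (hne.mono hTc)).to_subtype
  have : Countable c := hc.to_subtype
  let h : (ι → X) → ℝ := fun z => ⨅ p : c, g p + ∑ i, a i * dist (z i) ((p : ι → X) i)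
  have hbdd (z : ι → X) :
      BddBelow (range fun p : c => g p + ∑ i, a i * dist (z i) ((p : ι → X) i)) :=
    ⟨g z, forall_mem_range.2 fun p => hg.le_add_sum z p⟩
  have hsub (z w : ι → X) : h z - ∑ i, a i * dist (z i) (w i) ≤ h w := by
    refine le_ciInf fun p => ?_
    calc h z - ∑ i, a i * dist (z i) (w i)
        ≤ g p + ∑ i, a i * dist (z i) ((p : ι → X) i) - ∑ i, a i * dist (z i) (w i) := by
          gcongr; exact ciInf_le (hbdd z) p
      _ ≤ g p + ∑ i, a i * dist (w i) ((p : ι → X) i) := by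
          rw [add_sub_assoc, ← Finset.sum_sub_distrib]
          gcongr with i
          rw [← mul_sub]
          gcongr
          linarith [dist_triangle (z i) (w i) ((p : ι → X) i)]
  have hlip : WeightedLipschitzWith a h := fun z w => by
    have := hsub w z
    simp only [dist_comm (w _)] at this
    rw [Real.dist_eq, abs_sub_le_iff]
    constructor <;> linarith [hsub z w]
  have hmeas : Measurable h := Measurable.iInf fun p => measurable_const.add <|
    Finset.measurable_sum _ fun i _ =>
      ((continuous_id.dist continuous_const).measurable.comp (measurable_pi_apply i)).const_mul _
  have hc_eq : EqOn h g c := fun p hp =>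
    le_antisymm (by simpa using ciInf_le (hbdd p) ⟨p, hp⟩)
      (le_ciInf fun q => hg.le_add_sum p q)
  exact ⟨h, hmeas, hlip, (hc_eq.closure hlip.continuous hg.continuous).mono hTc⟩

theorem integrable_pi [MeasurableSpace X] {g : (ι → X) → ℝ} (hg : WeightedLipschitzWith a g)
    (hgm : Measurable g) {S : Set X} (hS : IsCompact S) {μ : ι → Measure X}
    [∀ i, IsProbabilityMeasure (μ i)] (hμ : ∀ i, ∀ᵐ x ∂μ i, x ∈ S) :
    Integrable g (Measure.pi μ) :=
  hg.continuous.continuousOn.integrable_of_ae_mem (isCompact_univ_pi fun _ => hS)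
    hgm.aestronglyMeasurable (ae_mem_univ_pi hμ)

section Fin

variable {n : ℕ} {a : Fin (n + 1) → ℝ≥0} {g : (Fin (n + 1) → X) → Y}

theorem comp_cons (hg : WeightedLipschitzWith a g) (x : X) :
    WeightedLipschitzWith (fun i => a i.succ) (fun y : Fin n → X => g (Fin.cons x y)) :=
  fun y y' => by simpa [Fin.sum_univ_succ] using hg (Fin.cons x y) (Fin.cons x y')

theorem lipschitzWith_cons (hg : WeightedLipschitzWith a g) (y : Fin n → X) :
    LipschitzWith (a 0) (fun x => g (Fin.cons x y)) :=
  LipschitzWith.of_dist_le_mul fun x x' => by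
    simpa [Fin.sum_univ_succ] using hg (Fin.cons x y) (Fin.cons x' y)

theorem lipschitzWith_integral_cons [MeasurableSpace X] {g : (Fin (n + 1) → X) → ℝ}
    (hg : WeightedLipschitzWith a g) (hgm : Measurable g) {S : Set X} (hS : IsCompact S)
    {μ : Fin n → Measure X} [∀ i, IsProbabilityMeasure (μ i)] (hμ : ∀ i, ∀ᵐ x ∂μ i, x ∈ S) :
    LipschitzWith (a 0) (fun x => ∫ y, g (Fin.cons x y) ∂Measure.pi μ) :=
  LipschitzWith.of_dist_le_mul fun x x' => by
    have hint x := (hg.comp_cons x).integrable_pi (hgm.comp (measurable_fin_cons x)) hS hμ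
    rw [dist_eq_norm, ← integral_sub (hint x) (hint x')]
    calc ‖∫ y, (g (Fin.cons x y) - g (Fin.cons x' y)) ∂Measure.pi μ‖
        ≤ a 0 * dist x x' * (Measure.pi μ).real univ :=
          norm_integral_le_of_norm_le_const <| ae_of_all _ fun y => by
            rw [← dist_eq_norm]; exact (hg.lipschitzWith_cons y).dist_le_mul x x'
      _ = a 0 * dist x x' := by rw [probReal_univ, mul_one]

end Fin

theorem abs_integral_pi_sub_le {X : Type*} [MetricSpace X] [MeasurableSpace X]
    [OpensMeasurableSpace X] {n : ℕ} {a : Fin n → ℝ≥0} {g : (Fin n → X) → ℝ}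
    (hg : WeightedLipschitzWith a g) (hgm : Measurable g) {S : Set X} (hS : IsCompact S)
    (μ ν : Fin n → Measure X) [∀ i, IsProbabilityMeasure (μ i)] [∀ i, IsProbabilityMeasure (ν i)]
    (hμ : ∀ i, ∀ᵐ x ∂μ i, x ∈ S) (hν : ∀ i, ∀ᵐ x ∂ν i, x ∈ S) :
    |∫ z, g z ∂Measure.pi μ - ∫ z, g z ∂Measure.pi ν| ≤ ∑ i, a i * dMK (μ i) (ν i) := by
  induction n with
  | zero => simp [Measure.pi_of_empty μ, Measure.pi_of_empty ν]
  | succ n ih =>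
    let F (ρ : Measure (Fin n → X)) (x : X) := ∫ y, g (Fin.cons x y) ∂ρ
    have hFμ := hg.lipschitzWith_integral_cons hgm hS fun i => hμ i.succ
    have hFν := hg.lipschitzWith_integral_cons hgm hS fun i => hν i.succ
    have h_first :
        |∫ x, F (.pi fun i => μ i.succ) x ∂μ 0 - ∫ x, F (.pi fun i => μ i.succ) x ∂ν 0|
          ≤ a 0 * dMK (μ 0) (ν 0) :=
      hFμ.abs_integral_sub_le_mul_dMK hS (hμ 0) (hν 0)
    have h_rest :
        |∫ x, F (.pi fun i => μ i.succ) x ∂ν 0 - ∫ x, F (.pi fun i => ν i.succ) x ∂ν 0|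
          ≤ ∑ i : Fin n, a i.succ * dMK (μ i.succ) (ν i.succ) := by
      rw [← integral_sub (hFμ.integrable_of_ae_mem hS (hν 0))
        (hFν.integrable_of_ae_mem hS (hν 0)), ← Real.norm_eq_abs]
      refine (norm_integral_le_of_norm_le_const (ae_of_all _ fun x => ?_)).trans_eq
        (by rw [probReal_univ, mul_one])
      exact ih (hg.comp_cons x) (hgm.comp (measurable_fin_cons x)) _ _
        (fun i => hμ i.succ) (fun i => hν i.succ)
    rw [integral_pi_fin_succ (hg.integrable_pi hgm hS hμ),
      integral_pi_fin_succ (hg.integrable_pi hgm hS hν), Fin.sum_univ_succ]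
    exact (abs_sub_le _ _ _).trans (add_le_add h_first h_rest)

end WeightedLipschitzWith

theorem stmt8_general {X : Type*} [MetricSpace X] [MeasurableSpace X] [BorelSpace X]
    {m : ℕ}
    (φ : (Fin m → X) → X) (a : Fin m → ℝ) (ha : ∀ i, 0 ≤ a i)
    (hφ : ∀ x y : Fin m → X, dist (φ x) (φ y) ≤ ∑ i, a i * dist (x i) (y i))
    (f : X → ℝ) (hf : LipschitzWith 1 f)
    (μ ν : Fin m → Measure X)
    [∀ i, IsProbabilityMeasure (μ i)] [∀ i, IsProbabilityMeasure (ν i)]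
    (hμ : ∀ i, ∃ K : Set X, IsCompact K ∧ μ i Kᶜ = 0)
    (hν : ∀ i, ∃ K : Set X, IsCompact K ∧ ν i Kᶜ = 0) :
    |∫ z, f (φ z) ∂(Measure.pi μ) - ∫ z, f (φ z) ∂(Measure.pi ν)|
      ≤ ∑ i, a i * dMK (μ i) (ν i) := by
  choose K hK hμK using hμ
  choose L hL hνL using hν
  set S := ⋃ i, K i ∪ L i
  have hS : IsCompact S := isCompact_iUnion fun i => (hK i).union (hL i)
  have hμS i : ∀ᵐ x ∂μ i, x ∈ S :=
    mem_of_superset (mem_ae_iff.2 (hμK i)) (subset_iUnion_of_subset i subset_union_left)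
  have hνS i : ∀ᵐ x ∂ν i, x ∈ S :=
    mem_of_superset (mem_ae_iff.2 (hνL i)) (subset_iUnion_of_subset i subset_union_right)
  have hφ' : WeightedLipschitzWith (fun i => (a i).toNNReal) φ := fun x y => by
    simpa only [Real.coe_toNNReal _ (ha _)] using hφ x y
  have hfφ := one_smul ℝ≥0 (fun i => (a i).toNNReal) ▸ hf.comp_weightedLipschitzWith hφ'
  have hT := ae_mem_univ_pi hμS
  obtain ⟨h, hh_meas, hh, hhT⟩ := hfφ.exists_measurable_eqOn
    (isCompact_univ_pi fun _ => hS).isSeparable hT.exists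
  have hμh := integral_congr_ae (hT.mono fun z hz => (hhT hz).symm)
  have hνh := integral_congr_ae ((ae_mem_univ_pi hνS).mono fun z hz => (hhT hz).symm)
  simpa only [comp_apply, ← hμh, ← hνh, Real.coe_toNNReal _ (ha _)]
    using hh.abs_integral_pi_sub_le hh_meas hS μ ν hμS hνS

/-- For an `(a_0, ..., a_{m-1})`-contraction `φ : Xᵐ → X`, a 1-Lipschitz
`f : X → ℝ` and compactly supported probability measures, the integrals of
`f ∘ φ` against the product measures differ by at most
`Σ aᵢ · d_MK(μᵢ, νᵢ)`. -/
theorem stmt8 {X : Type*} [MetricSpace X] [MeasurableSpace X] [BorelSpace X]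
    {m : ℕ} (hm : 1 ≤ m)
    (φ : (Fin m → X) → X) (a : Fin m → ℝ) (ha : ∀ i, 0 ≤ a i)
    (hφ : ∀ x y : Fin m → X, dist (φ x) (φ y) ≤ ∑ i, a i * dist (x i) (y i))
    (f : X → ℝ) (hf : LipschitzWith 1 f)
    (μ ν : Fin m → Measure X)
    [∀ i, IsProbabilityMeasure (μ i)] [∀ i, IsProbabilityMeasure (ν i)]
    (hμ : ∀ i, ∃ K : Set X, IsCompact K ∧ μ i Kᶜ = 0)
    (hν : ∀ i, ∃ K : Set X, IsCompact K ∧ ν i Kᶜ = 0) :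
    |∫ z, f (φ z) ∂(Measure.pi μ) - ∫ z, f (φ z) ∂(Measure.pi ν)|
      ≤ ∑ i, a i * dMK (μ i) (ν i) :=
  stmt8_general φ a ha hφ f hf μ ν hμ hν
end

section
/- Let (X,d) be a metric space and let S = (X,(φ_j)_{j=1}^L,(p_j)_{j=1}^L) be a GIFS with probabilities of order m in which each φ_j is an (a_0,...,a_{m−1})-contraction. Then the generalized Markov operator M_S is itself an (a_0,...,a_{m−1})-contraction on compactly supported Borel probability measures: d_MK(M_S(μ_0,...,μ_{m−1}), M_S(ν_0,...,ν_{m−1})) ≤ Σ_{i=0}^{m−1} a_i · d_MK(μ_i, ν_i) for all μ_0,...,μ_{m−1}, ν_0,...,ν_{m−1} ∈ P(X). -/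
open MeasureTheory

/-!
Test both sides against a 1-Lipschitz `f`. Since `dMK` is convex under mixtures, it suffices
to treat a single map `φ`, where `∫ f d(φ♯ ∏ μᵢ) = ∫ f ∘ φ d(∏ μᵢ)`. Exchanging the factors
`μᵢ` for `νᵢ` one at a time (Fubini), each exchange moves the integral by at most
`aᵢ · dMK(μᵢ, νᵢ)`, because the partial integral is `aᵢ`-Lipschitz in the `i`-th variable.

`X` need not be separable, so `φ` need not be measurable for the product σ-algebra; on the
product of the compact supports it agrees with a measurable map, which is all the argument uses.
-/

open Set NNReal

lemma nonempty_of_measure_compl_eq_zero {α : Type*} [MeasurableSpace α] {μ : Measure α}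
    [IsProbabilityMeasure μ] {K : Set α} (hμK : μ Kᶜ = 0) : K.Nonempty :=
  Filter.nonempty_of_mem (mem_ae_iff.2 hμK)

lemma Measurable.integrable_of_forall_norm_le {α : Type*} [MeasurableSpace α] {ρ : Measure α}
    [IsFiniteMeasure ρ] {F : α → ℝ} (hF : Measurable F) {C : ℝ} (hFC : ∀ z, ‖F z‖ ≤ C) :
    Integrable F ρ :=
  .of_bound hF.aestronglyMeasurable C (.of_forall hFC)

section Products

lemma univ_pi_mem_ae_pi {ι : Type*} [Fintype ι] {α : ι → Type*} [∀ i, MeasurableSpace (α i)]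
    {μ : ∀ i, Measure (α i)} [∀ i, SigmaFinite (μ i)] {K : ∀ i, Set (α i)}
    (hμK : ∀ i, μ i (K i)ᶜ = 0) : univ.pi K ∈ ae (Measure.pi μ) :=
  Measure.ae_pi_le_pi <| Filter.pi_mem_pi finite_univ fun i _ => mem_ae_iff.2 (hμK i)

variable {X : Type*} [MeasurableSpace X]

lemma measurable_finCons {n : ℕ} :
    Measurable fun z : X × (Fin n → X) => (Fin.cons z.1 z.2 : Fin (n + 1) → X) :=
  measurable_pi_iff.2 fun i =>
    Fin.cases measurable_fst (fun j => (measurable_pi_apply j).comp measurable_snd) i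

variable {E : Type*} [NormedAddCommGroup E] [NormedSpace ℝ E]

lemma integral_pi_eq_integral_prod_cons {n : ℕ} (ρ : Fin (n + 1) → Measure X)
    [∀ i, SigmaFinite (ρ i)] (F : (Fin (n + 1) → X) → E) :
    ∫ x, F x ∂Measure.pi ρ =
      ∫ z, F (Fin.cons z.1 z.2) ∂(ρ 0).prod (Measure.pi fun j => ρ j.succ) := by
  have h := measurePreserving_piFinSuccAbove ρ 0
  simp only [Fin.succAbove_zero] at h
  rw [← h.integral_comp']
  congr 1 with x
  simp

end Products

section MongeKantorovich

variable {X : Type*} [MetricSpace X] [MeasurableSpace X]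

lemma dMK_nonneg (μ ν : Measure X) : 0 ≤ dMK μ ν :=
  Real.sSup_nonneg fun _ ⟨_, _, hs⟩ => hs ▸ abs_nonneg _

lemma dMK_le_of_forall_lipschitzWith {μ ν : Measure X} {C : ℝ} (hC : 0 ≤ C)
    (h : ∀ f : X → ℝ, LipschitzWith 1 f → |∫ x, f x ∂μ - ∫ x, f x ∂ν| ≤ C) : dMK μ ν ≤ C :=
  Real.sSup_le (fun _ ⟨f, hf, hs⟩ => hs ▸ h f hf) hC

variable [BorelSpace X] {μ ν : Measure X} {K : Set X}

lemma Continuous.integrable_of_measure_compl_eq_zero [IsFiniteMeasure μ] (hK : IsCompact K)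
    (hμK : μ Kᶜ = 0) {f : X → ℝ} (hf : Continuous f) : Integrable f μ := by
  have := hf.continuousOn.integrableOn_compact (μ := μ) hK
  rwa [IntegrableOn, Measure.restrict_eq_self_of_ae_mem (mem_ae_iff.2 hμK)] at this

lemma abs_integral_sub_le_diam [IsProbabilityMeasure μ] (hK : IsCompact K) (hμK : μ Kᶜ = 0)
    {f : X → ℝ} (hf : LipschitzWith 1 f) {x₀ : X} (hx₀ : x₀ ∈ K) :
    |∫ x, f x ∂μ - f x₀| ≤ Metric.diam K := by
  have hint := hf.continuous.integrable_of_measure_compl_eq_zero hK hμK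
  have hbound : ∀ᵐ x ∂μ, ‖f x - f x₀‖ ≤ Metric.diam K := by
    filter_upwards [mem_ae_iff.2 hμK] with x hx
    calc ‖f x - f x₀‖ = dist (f x) (f x₀) := rfl
      _ ≤ dist x x₀ := by simpa using hf.dist_le_mul x x₀
      _ ≤ Metric.diam K := Metric.dist_le_diam_of_mem hK.isBounded hx hx₀
  simpa [integral_sub hint (integrable_const _)] using norm_integral_le_of_norm_le_const hbound

lemma bddAbove_dMK_set [IsProbabilityMeasure μ] [IsProbabilityMeasure ν] (hK : IsCompact K)
    (hμK : μ Kᶜ = 0) (hνK : ν Kᶜ = 0) :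
    BddAbove {s : ℝ | ∃ f : X → ℝ, LipschitzWith 1 f ∧ s = |∫ x, f x ∂μ - ∫ x, f x ∂ν|} := by
  obtain ⟨x₀, hx₀⟩ := nonempty_of_measure_compl_eq_zero hμK
  refine ⟨2 * Metric.diam K, ?_⟩
  rintro _ ⟨f, hf, rfl⟩
  have hμ := abs_integral_sub_le_diam hK hμK hf hx₀
  have hν := abs_integral_sub_le_diam hK hνK hf hx₀
  calc |∫ x, f x ∂μ - ∫ x, f x ∂ν| ≤ |∫ x, f x ∂μ - f x₀| + |∫ x, f x ∂ν - f x₀| :=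
        by rw [abs_sub_comm (∫ x, f x ∂ν)]; exact abs_sub_le _ _ _
    _ ≤ 2 * Metric.diam K := by linarith

lemma abs_integral_sub_le_mul_dMK [IsProbabilityMeasure μ] [IsProbabilityMeasure ν]
    (hK : IsCompact K) (hμK : μ Kᶜ = 0) (hνK : ν Kᶜ = 0) {c : ℝ≥0} {G : X → ℝ}
    (hG : LipschitzOnWith c G K) :
    |∫ x, G x ∂μ - ∫ x, G x ∂ν| ≤ c * dMK μ ν := by
  obtain ⟨g, hg, hgG⟩ := hG.extend_real
  have hint : ∀ ρ : Measure X, ρ Kᶜ = 0 → ∫ x, G x ∂ρ = ∫ x, g x ∂ρ := fun ρ hρK =>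
    integral_congr_ae <| Filter.mem_of_superset (mem_ae_iff.2 hρK) fun _ hx => hgG hx
  rw [hint μ hμK, hint ν hνK]
  rcases eq_or_ne c 0 with rfl | hc
  · obtain ⟨x₀⟩ := (nonempty_of_measure_compl_eq_zero hμK).to_subtype
    have : g = fun _ => g x₀ := funext fun x => (LipschitzWith.zero_iff g).1 hg x x₀
    rw [this]
    simp
  · have hg₁ : LipschitzWith 1 fun x => (c⁻¹ : ℝ) * g x := by
      have := (lipschitzWith_smul (c⁻¹ : ℝ)).comp hg
      simpa [hc, Function.comp_def] using this
    have := le_csSup (bddAbove_dMK_set hK hμK hνK) ⟨_, hg₁, rfl⟩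
    rw [integral_const_mul, integral_const_mul, ← mul_sub, abs_mul, abs_of_nonneg (by positivity),
      inv_mul_le_iff₀ (by positivity)] at this
    exact this

theorem abs_integral_prod_sub_le {Y : Type*} [MeasurableSpace Y]
    [IsProbabilityMeasure μ] [IsProbabilityMeasure ν]
    {ρ σ : Measure Y} [IsProbabilityMeasure ρ] [IsProbabilityMeasure σ]
    (hK : IsCompact K) (hμK : μ Kᶜ = 0) (hνK : ν Kᶜ = 0)
    {F : X × Y → ℝ} (hFm : Measurable F) {C : ℝ} (hFC : ∀ z, ‖F z‖ ≤ C) {c : ℝ≥0} {b : ℝ}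
    (hFX : ∀ x ∈ K, ∀ x' ∈ K, ∀ᵐ y ∂ρ, |F (x, y) - F (x', y)| ≤ c * dist x x')
    (hFY : ∀ x ∈ K, |∫ y, F (x, y) ∂ρ - ∫ y, F (x, y) ∂σ| ≤ b) :
    |∫ z, F z ∂μ.prod ρ - ∫ z, F z ∂ν.prod σ| ≤ c * dMK μ ν + b := by
  have hsection : ∀ x (τ : Measure Y) [IsFiniteMeasure τ], Integrable (fun y => F (x, y)) τ :=
    fun x _ _ => (hFm.comp measurable_prodMk_left).integrable_of_forall_norm_le fun _ => hFC _
  have hfiber : ∀ (τ : Measure Y) [IsProbabilityMeasure τ],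
      Integrable (fun x => ∫ y, F (x, y) ∂τ) ν := fun τ _ =>
    .of_bound hFm.stronglyMeasurable.integral_prod_right'.aestronglyMeasurable C
      (.of_forall fun x => by
        simpa using norm_integral_le_of_norm_le_const (μ := τ) (.of_forall fun y => hFC (x, y)))
  have hLip : LipschitzOnWith c (fun x => ∫ y, F (x, y) ∂ρ) K := by
    refine LipschitzOnWith.of_dist_le_mul fun x hx x' hx' => ?_
    rw [Real.dist_eq, ← integral_sub (hsection x ρ) (hsection x' ρ)]
    simpa using norm_integral_le_of_norm_le_const
      (f := fun y => F (x, y) - F (x', y)) (hFX x hx x' hx')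
  have hY : |∫ x, (∫ y, F (x, y) ∂ρ - ∫ y, F (x, y) ∂σ) ∂ν| ≤ b := by
    have := norm_integral_le_of_norm_le_const (μ := ν) (C := b)
        (f := fun x => ∫ y, F (x, y) ∂ρ - ∫ y, F (x, y) ∂σ) <| by
      filter_upwards [mem_ae_iff.2 hνK] with x hx using hFY x hx
    simpa using this
  rw [integral_sub (hfiber ρ) (hfiber σ)] at hY
  rw [integral_prod F (hFm.integrable_of_forall_norm_le hFC),
    integral_prod F (hFm.integrable_of_forall_norm_le hFC)]
  calc _ ≤ |∫ x, ∫ y, F (x, y) ∂ρ ∂μ - ∫ x, ∫ y, F (x, y) ∂ρ ∂ν|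
        + |∫ x, ∫ y, F (x, y) ∂ρ ∂ν - ∫ x, ∫ y, F (x, y) ∂σ ∂ν| := abs_sub_le _ _ _
    _ ≤ c * dMK μ ν + b := add_le_add (abs_integral_sub_le_mul_dMK hK hμK hνK hLip) hY

theorem abs_integral_pi_sub_le {n : ℕ} (a : Fin n → ℝ) (ha : ∀ i, 0 ≤ a i)
    (μ ν : Fin n → Measure X) [∀ i, IsProbabilityMeasure (μ i)] [∀ i, IsProbabilityMeasure (ν i)]
    (K : Fin n → Set X) (hK : ∀ i, IsCompact (K i))
    (hμK : ∀ i, μ i (K i)ᶜ = 0) (hνK : ∀ i, ν i (K i)ᶜ = 0)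
    {F : (Fin n → X) → ℝ} (hFm : Measurable F) {C : ℝ} (hFC : ∀ x, ‖F x‖ ≤ C)
    (hF : ∀ x ∈ univ.pi K, ∀ y ∈ univ.pi K, |F x - F y| ≤ ∑ i, a i * dist (x i) (y i)) :
    |∫ x, F x ∂Measure.pi μ - ∫ x, F x ∂Measure.pi ν| ≤ ∑ i, a i * dMK (μ i) (ν i) := by
  induction n with
  | zero => simp [integral_unique]
  | succ n ih =>
    have hcons : ∀ x r, Fin.cons x r ∈ univ.pi K ↔ x ∈ K 0 ∧ r ∈ univ.pi fun j => K j.succ := by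
      simp [Fin.forall_fin_succ]
    rw [integral_pi_eq_integral_prod_cons, integral_pi_eq_integral_prod_cons, Fin.sum_univ_succ]
    refine abs_integral_prod_sub_le (c := ⟨a 0, ha 0⟩) (hK 0) (hμK 0) (hνK 0)
      (hFm.comp measurable_finCons) (fun _ => hFC _) ?_ fun x hx => ?_
    · intro x hx x' hx'
      filter_upwards [univ_pi_mem_ae_pi fun j => hμK j.succ] with r hr
      show _ ≤ a 0 * dist x x'
      simpa [Fin.sum_univ_succ] using
        hF _ ((hcons x r).2 ⟨hx, hr⟩) _ ((hcons x' r).2 ⟨hx', hr⟩)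
    · refine ih _ (fun _ => ha _) _ _ _ (fun _ => hK _) (fun _ => hμK _) (fun _ => hνK _)
        (hFm.comp (measurable_finCons.comp measurable_prodMk_left)) (fun _ => hFC _)
        fun r hr r' hr' => ?_
      simpa [Fin.sum_univ_succ] using
        hF _ ((hcons x r).2 ⟨hx, hr⟩) _ ((hcons x r').2 ⟨hx, hr'⟩)

lemma exists_measurable_eqOn_univ_pi {ι Y : Type*} [Countable ι] [TopologicalSpace Y]
    [MeasurableSpace Y] [BorelSpace Y] {K : ι → Set X} (hK : ∀ i, IsCompact (K i))
    (hKne : ∀ i, (K i).Nonempty) {φ : (ι → X) → Y} (hφ : Continuous φ) :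
    ∃ g : (ι → X) → Y, Measurable g ∧ EqOn g φ (univ.pi K) ∧ range g ⊆ φ '' univ.pi K := by
  classical
  have : ∀ i, CompactSpace (K i) := fun i => isCompact_iff_compactSpace.mp (hK i)
  let r : ι → X → X := fun i x => if x ∈ K i then x else (hKne i).some
  have hr_mem : ∀ i x, r i x ∈ K i := fun i x => by
    by_cases hx : x ∈ K i <;> simp [r, hx, (hKne i).some_mem]
  have hr : ∀ i, Measurable (r i) := fun i =>
    Measurable.ite (hK i).isClosed.measurableSet measurable_id measurable_const
  let ψ : (∀ i, K i) → Y := fun y => φ fun i => y i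
  have hψ : Measurable ψ :=
    (hφ.comp (continuous_pi fun i => (continuous_apply i).subtype_val)).measurable
  refine ⟨fun x => ψ fun i => ⟨r i (x i), hr_mem i (x i)⟩,
    hψ.comp (measurable_pi_lambda _ fun i => ((hr i).comp (measurable_pi_apply i)).subtype_mk),
    fun x hx => ?_, ?_⟩
  · simp_all [ψ, r]
  · rintro _ ⟨x, rfl⟩
    exact ⟨_, fun i _ => hr_mem i (x i), rfl⟩

section Pushforward

variable {ι : Type*} [Fintype ι] {μ : ι → Measure X} [∀ i, IsProbabilityMeasure (μ i)]
  {K : ι → Set X} {φ : (ι → X) → X}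

lemma Continuous.aemeasurable_pi (hφ : Continuous φ) (hK : ∀ i, IsCompact (K i))
    (hμK : ∀ i, μ i (K i)ᶜ = 0) : AEMeasurable φ (Measure.pi μ) := by
  obtain ⟨g, hg, hgφ, -⟩ := exists_measurable_eqOn_univ_pi hK
    (fun i => nonempty_of_measure_compl_eq_zero (hμK i)) hφ
  exact ⟨g, hg, Filter.mem_of_superset (univ_pi_mem_ae_pi hμK) fun _ hx => (hgφ hx).symm⟩

lemma map_pi_compl_image_eq_zero (hφ : Continuous φ) (hK : ∀ i, IsCompact (K i))
    (hμK : ∀ i, μ i (K i)ᶜ = 0) : (Measure.pi μ).map φ (φ '' univ.pi K)ᶜ = 0 := by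
  rw [Measure.map_apply_of_aemeasurable (hφ.aemeasurable_pi hK hμK)
    ((isCompact_univ_pi hK).image hφ).isClosed.measurableSet.compl]
  exact measure_mono_null (fun x hx hxK => hx ⟨x, hxK, rfl⟩)
    (mem_ae_iff.1 (univ_pi_mem_ae_pi hμK))

end Pushforward

theorem dMK_map_pi_le {m : ℕ} {φ : (Fin m → X) → X} (hφc : Continuous φ) (a : Fin m → ℝ)
    (ha : ∀ i, 0 ≤ a i) (hφ : ∀ x y, dist (φ x) (φ y) ≤ ∑ i, a i * dist (x i) (y i))
    {μ ν : Fin m → Measure X} [∀ i, IsProbabilityMeasure (μ i)] [∀ i, IsProbabilityMeasure (ν i)]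
    {K : Fin m → Set X} (hK : ∀ i, IsCompact (K i))
    (hμK : ∀ i, μ i (K i)ᶜ = 0) (hνK : ∀ i, ν i (K i)ᶜ = 0) :
    dMK ((Measure.pi μ).map φ) ((Measure.pi ν).map φ) ≤ ∑ i, a i * dMK (μ i) (ν i) := by
  obtain ⟨g, hg, hgφ, hg_range⟩ := exists_measurable_eqOn_univ_pi hK
    (fun i => nonempty_of_measure_compl_eq_zero (hμK i)) hφc
  have hmap : ∀ ρ : Fin m → Measure X, [∀ i, IsProbabilityMeasure (ρ i)] →
      (∀ i, ρ i (K i)ᶜ = 0) → (Measure.pi ρ).map φ = (Measure.pi ρ).map g := fun ρ _ hρK =>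
    Measure.map_congr <| Filter.mem_of_superset (univ_pi_mem_ae_pi hρK) fun _ hx => (hgφ hx).symm
  rw [hmap μ hμK, hmap ν hνK]
  refine dMK_le_of_forall_lipschitzWith
    (Finset.sum_nonneg fun i _ => mul_nonneg (ha i) (dMK_nonneg _ _)) fun f hf => ?_
  obtain ⟨C, hC⟩ :=
    ((isCompact_univ_pi hK).image hφc).exists_bound_of_continuousOn hf.continuous.continuousOn
  rw [integral_map hg.aemeasurable hf.continuous.aestronglyMeasurable,
    integral_map hg.aemeasurable hf.continuous.aestronglyMeasurable]
  refine abs_integral_pi_sub_le a ha μ ν K hK hμK hνK (hf.continuous.measurable.comp hg)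
    (fun x => hC _ (hg_range ⟨x, rfl⟩)) fun x hx y hy => ?_
  rw [hgφ hx, hgφ hy]
  calc |f (φ x) - f (φ y)| ≤ dist (φ x) (φ y) := by
        simpa [Real.dist_eq] using hf.dist_le_mul (φ x) (φ y)
    _ ≤ ∑ i, a i * dist (x i) (y i) := hφ x y

theorem dMK_sum_smul_le {ι : Type*} [Fintype ι] (p : ι → ℝ≥0) (α β : ι → Measure X)
    [∀ j, IsProbabilityMeasure (α j)] [∀ j, IsProbabilityMeasure (β j)]
    {K : ι → Set X} (hK : ∀ j, IsCompact (K j))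
    (hαK : ∀ j, α j (K j)ᶜ = 0) (hβK : ∀ j, β j (K j)ᶜ = 0) :
    dMK (∑ j, p j • α j) (∑ j, p j • β j) ≤ ∑ j, p j * dMK (α j) (β j) := by
  refine dMK_le_of_forall_lipschitzWith
    (Finset.sum_nonneg fun j _ => mul_nonneg (p j).2 (dMK_nonneg _ _)) fun f hf => ?_
  have hint : ∀ (ρ : ι → Measure X) [∀ j, IsProbabilityMeasure (ρ j)], (∀ j, ρ j (K j)ᶜ = 0) →
      ∫ x, f x ∂(∑ j, p j • ρ j) = ∑ j, (p j : ℝ) * ∫ x, f x ∂ρ j := by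
    intro ρ _ hρK
    rw [integral_finsetSum_measure fun j _ =>
      (hf.continuous.integrable_of_measure_compl_eq_zero (hK j) (hρK j)).smul_measure_nnreal]
    simp [integral_smul_nnreal_measure, NNReal.smul_def]
  rw [hint α hαK, hint β hβK, ← Finset.sum_sub_distrib]
  refine (Finset.abs_sum_le_sum_abs _ _).trans (Finset.sum_le_sum fun j _ => ?_)
  rw [← mul_sub, abs_mul, NNReal.abs_eq]
  exact mul_le_mul_of_nonneg_left
    (abs_integral_sub_le_mul_dMK (c := 1) (hK j) (hαK j) (hβK j) hf.lipschitzOnWith |>.trans_eq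
      (one_mul _)) (p j).2

end MongeKantorovich

theorem stmt9_general {X : Type*} [MetricSpace X] [MeasurableSpace X] [BorelSpace X]
    {m L : ℕ}
    (φ : Fin L → (Fin m → X) → X) (hφc : ∀ j, Continuous (φ j))
    (p : Fin L → NNReal) (hp1 : ∑ j, p j = 1)
    (a : Fin m → ℝ) (ha : ∀ i, 0 ≤ a i)
    (hφ : ∀ j, ∀ x y : Fin m → X,
      dist (φ j x) (φ j y) ≤ ∑ i, a i * dist (x i) (y i))
    (μ ν : Fin m → Measure X)
    [∀ i, IsProbabilityMeasure (μ i)] [∀ i, IsProbabilityMeasure (ν i)]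
    (hμ : ∀ i, ∃ K : Set X, IsCompact K ∧ μ i Kᶜ = 0)
    (hν : ∀ i, ∃ K : Set X, IsCompact K ∧ ν i Kᶜ = 0) :
    dMK (∑ j, p j • (Measure.pi μ).map (φ j)) (∑ j, p j • (Measure.pi ν).map (φ j))
      ≤ ∑ i, a i * dMK (μ i) (ν i) := by
  choose Kμ hKμ hμKμ using hμ
  choose Kν hKν hνKν using hν
  set K := fun i => Kμ i ∪ Kν i
  have hK : ∀ i, IsCompact (K i) := fun i => (hKμ i).union (hKν i)
  have hμK : ∀ i, μ i (K i)ᶜ = 0 := fun i =>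
    measure_mono_null (compl_subset_compl.2 subset_union_left) (hμKμ i)
  have hνK : ∀ i, ν i (K i)ᶜ = 0 := fun i =>
    measure_mono_null (compl_subset_compl.2 subset_union_right) (hνKν i)
  have : ∀ j, IsProbabilityMeasure ((Measure.pi μ).map (φ j)) := fun j =>
    Measure.isProbabilityMeasure_map ((hφc j).aemeasurable_pi hK hμK)
  have : ∀ j, IsProbabilityMeasure ((Measure.pi ν).map (φ j)) := fun j =>
    Measure.isProbabilityMeasure_map ((hφc j).aemeasurable_pi hK hνK)
  calc _ ≤ ∑ j, p j * dMK ((Measure.pi μ).map (φ j)) ((Measure.pi ν).map (φ j)) :=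
        dMK_sum_smul_le p _ _ (fun j => (isCompact_univ_pi hK).image (hφc j))
          (fun j => map_pi_compl_image_eq_zero (hφc j) hK hμK)
          (fun j => map_pi_compl_image_eq_zero (hφc j) hK hνK)
    _ ≤ ∑ j, p j * ∑ i, a i * dMK (μ i) (ν i) := by
        gcongr with j
        exact dMK_map_pi_le (hφc j) a ha (hφ j) hK hμK hνK
    _ = ∑ i, a i * dMK (μ i) (ν i) := by
        rw [← Finset.sum_mul, ← NNReal.coe_sum, hp1, NNReal.coe_one, one_mul]

/-- If a GIFS with probabilities consists of `(a_0, ..., a_{m-1})`-contractions,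
then its generalized Markov operator is itself an
`(a_0, ..., a_{m-1})`-contraction with respect to the Monge–Kantorovich metric. -/
theorem stmt9 {X : Type*} [MetricSpace X] [MeasurableSpace X] [BorelSpace X]
    {m L : ℕ} (hm : 1 ≤ m) (hL : 0 < L)
    (φ : Fin L → (Fin m → X) → X) (hφc : ∀ j, Continuous (φ j))
    (p : Fin L → NNReal) (hp : ∀ j, 0 < p j) (hp1 : ∑ j, p j = 1)
    (a : Fin m → ℝ) (ha : ∀ i, 0 ≤ a i)
    (hφ : ∀ j, ∀ x y : Fin m → X,
      dist (φ j x) (φ j y) ≤ ∑ i, a i * dist (x i) (y i))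
    (μ ν : Fin m → Measure X)
    [∀ i, IsProbabilityMeasure (μ i)] [∀ i, IsProbabilityMeasure (ν i)]
    (hμ : ∀ i, ∃ K : Set X, IsCompact K ∧ μ i Kᶜ = 0)
    (hν : ∀ i, ∃ K : Set X, IsCompact K ∧ ν i Kᶜ = 0) :
    dMK (∑ j, p j • (Measure.pi μ).map (φ j)) (∑ j, p j • (Measure.pi ν).map (φ j))
      ≤ ∑ i, a i * dMK (μ i) (ν i) :=
  stmt9_general φ hφc p hp1 a ha hφ μ ν hμ hν
end

section
/- Let (X,d) be a complete metric space and let S = (X,(φ_j)_{j=1}^L) be a GIFS of order m in which each φ_j : X^m → X is Lipschitz (with respect to the maximum metric) with constant at most α_S < 1, and let A_S be the attractor of S. Let ε > 0, let X̂ be a proper ε-net of X, let r : X → X̂ be an ε-projection, and set φ̂_j := r ∘ φ_j and F̄_Ŝ(K) := ⋃_{j=1}^L φ̂_j(K × ... × K). Then for every nonempty finite K ⊆ X̂ and every n ∈ ℕ, h(F̄_Ŝⁿ(K), A_S) ≤ ε/(1−α_S) + α_Sⁿ · h(K, A_S). In particular, for all sufficiently large n, F̄_Ŝⁿ(K) is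 within Hausdorff distance 2ε/(1−α_S) of A_S. -/
/-!
The discretized operator `K ↦ ⋃ⱼ r(φⱼ(K × ⋯ × K))` is an `ε`-perturbation of the generalized
Hutchinson operator, whose contraction constant is `α`: if every point of `S` is within `c` of
`T` and conversely, then the same holds for the images with `c` replaced by `ε + α c`.
The sequence `cₙ = ε/(1-α) + αⁿ h(K, A)` satisfies `cₙ₊₁ = ε + α cₙ`, so by induction it bounds
the Hausdorff distance of the `n`-th iterate from the attractor `A = ⋃ⱼ φⱼ(A × ⋯ × A)`, and
`αⁿ h(K, A) → 0` gives the eventual bound `2ε/(1-α)`.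
-/

open Filter Metric

section Hutchinson

variable {X ι J : Type*} [PseudoMetricSpace X]

def WithinDist (c : ℝ) (S T : Set X) : Prop :=
  ∀ x ∈ S, ∃ y ∈ T, dist x y ≤ c

def hutchinson (f : J → (ι → X) → X) (S : Set X) : Set X :=
  ⋃ j, f j '' Set.univ.pi fun _ => S

theorem WithinDist.mono {c d : ℝ} {S T : Set X} (h : WithinDist c S T) (hcd : c ≤ d) :
    WithinDist d S T := fun x hx =>
  let ⟨y, hyT, hxy⟩ := h x hx
  ⟨y, hyT, hxy.trans hcd⟩

theorem withinDist_hausdorffDist {S T : Set X} (hS : S.Nonempty) (hSb : Bornology.IsBounded S)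
    (hT : IsCompact T) (hT' : T.Nonempty) : WithinDist (hausdorffDist S T) S T := by
  intro x hx
  obtain ⟨y, hyT, hxy⟩ := hT.exists_infDist_eq_dist hT' x
  refine ⟨y, hyT, hxy ▸ infDist_le_hausdorffDist_of_mem hx ?_⟩
  exact hausdorffEDist_ne_top_of_nonempty_of_bounded hS hT' hSb hT.isBounded

theorem WithinDist.hutchinson [Fintype ι] {f g : J → (ι → X) → X} {ε α c : ℝ} {S T : Set X}
    (hα : 0 ≤ α) (hc : 0 ≤ c) (hfg : ∀ j x y, dist (f j x) (g j y) ≤ ε + α * dist x y)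
    (h : WithinDist c S T) : WithinDist (ε + α * c) (hutchinson f S) (hutchinson g T) := by
  intro z hz
  obtain ⟨j, x, hxS, rfl⟩ := Set.mem_iUnion.1 hz
  choose y hyT hxy using fun i => h (x i) (hxS i (Set.mem_univ i))
  refine ⟨g j y, Set.mem_iUnion.2 ⟨j, y, fun i _ => hyT i, rfl⟩, ?_⟩
  calc dist (f j x) (g j y) ≤ ε + α * dist x y := hfg j x y
    _ ≤ ε + α * c := by gcongr; exact (dist_pi_le_iff hc).2 hxy

theorem dist_comp_le_of_lipschitzWith [Fintype ι] {ε : ℝ} {α : NNReal} {φ : (ι → X) → X}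
    {r : X → X} (hφ : LipschitzWith α φ) (hr : ∀ x, dist x (r x) ≤ ε) (x y : ι → X) :
    dist (r (φ x)) (φ y) ≤ ε + α * dist x y :=
  calc dist (r (φ x)) (φ y) ≤ dist (r (φ x)) (φ x) + dist (φ x) (φ y) := dist_triangle _ _ _
    _ ≤ ε + α * dist x y := add_le_add (dist_comm (φ x) _ ▸ hr _) (hφ.dist_le_mul x y)

variable [Fintype ι] {f g : J → (ι → X) → X} {ε α c : ℝ} {K A : Set X}

theorem withinDist_iterate_hutchinson (hα0 : 0 ≤ α) (hα1 : α < 1) (hε : 0 ≤ ε) (hc : 0 ≤ c)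
    (hfg : ∀ j x y, dist (f j x) (g j y) ≤ ε + α * dist x y) (hA : hutchinson g A = A)
    (hKA : WithinDist c K A) (hAK : WithinDist c A K) (n : ℕ) :
    WithinDist (ε / (1 - α) + α ^ n * c) ((hutchinson f)^[n] K) A ∧
      WithinDist (ε / (1 - α) + α ^ n * c) A ((hutchinson f)^[n] K) := by
  have hε' : 0 ≤ ε / (1 - α) := div_nonneg hε (by linarith)
  induction n with
  | zero =>
    have hle : c ≤ ε / (1 - α) + α ^ 0 * c := by simpa using hε'
    exact ⟨hKA.mono hle, hAK.mono hle⟩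
  | succ n ih =>
    have hcn : 0 ≤ ε / (1 - α) + α ^ n * c := by positivity
    -- `cₙ = ε/(1-α) + αⁿ c` solves `cₙ₊₁ = ε + α cₙ` exactly.
    have hrec : ε + α * (ε / (1 - α) + α ^ n * c) = ε / (1 - α) + α ^ (n + 1) * c := by
      field_simp [(by linarith : (1 - α) ≠ 0)]
      ring
    have hgf : ∀ j x y, dist (g j x) (f j y) ≤ ε + α * dist x y := fun j x y => by
      rw [dist_comm, dist_comm x]; exact hfg j y x
    rw [Function.iterate_succ_apply', ← hrec]
    constructor
    · simpa only [hA] using ih.1.hutchinson hα0 hcn hfg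
    · simpa only [hA] using ih.2.hutchinson hα0 hcn hgf

theorem hausdorffDist_iterate_hutchinson_le (hα0 : 0 ≤ α) (hα1 : α < 1) (hε : 0 ≤ ε)
    (hfg : ∀ j x y, dist (f j x) (g j y) ≤ ε + α * dist x y) (hA : hutchinson g A = A)
    (hK : K.Nonempty) (hKc : IsCompact K) (hA' : A.Nonempty) (hAc : IsCompact A) (n : ℕ) :
    hausdorffDist ((hutchinson f)^[n] K) A ≤ ε / (1 - α) + α ^ n * hausdorffDist K A := by
  have hKA := withinDist_hausdorffDist hK hKc.isBounded hAc hA'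
  have hAK := withinDist_hausdorffDist hA' hAc.isBounded hKc hK
  rw [hausdorffDist_comm] at hAK
  obtain ⟨h₁, h₂⟩ := withinDist_iterate_hutchinson hα0 hα1 hε hausdorffDist_nonneg hfg hA hKA hAK n
  have hε' : 0 ≤ ε / (1 - α) := div_nonneg hε (by linarith)
  exact hausdorffDist_le_of_mem_dist
    (add_nonneg hε' (mul_nonneg (pow_nonneg hα0 n) hausdorffDist_nonneg)) h₁ h₂

end Hutchinson

theorem eventually_pow_mul_le {α c δ : ℝ} (hα0 : 0 ≤ α) (hα1 : α < 1) (hδ : 0 < δ) :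
    ∀ᶠ n in atTop, α ^ n * c ≤ δ := by
  have h : Tendsto (fun n => α ^ n * c) atTop (nhds 0) := by
    simpa using (tendsto_pow_atTop_nhds_zero_of_lt_one hα0 hα1).mul_const c
  exact h.eventually (eventually_le_nhds hδ)

theorem stmt17_general {X : Type*} [MetricSpace X]
    {m L : ℕ}
    (φ : Fin L → (Fin m → X) → X) (αS : NNReal) (hαS : αS < 1)
    (hφ : ∀ j, LipschitzWith αS (φ j))
    (A : Set X) (hA : A.Nonempty) (hAc : IsCompact A)
    (hAfix : A = ⋃ j, φ j '' Set.univ.pi (fun _ : Fin m => A))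
    (ε : ℝ) (hε : 0 < ε)
    (r : X → X)
    (hr_close : ∀ x, dist x (r x) ≤ ε)
    (K : Set X) (hK : K.Nonempty) (hKfin : K.Finite) :
    (∀ n : ℕ,
      Metric.hausdorffDist
        ((fun S => ⋃ j, (r ∘ φ j) '' Set.univ.pi (fun _ : Fin m => S))^[n] K) A
        ≤ ε / (1 - αS) + (αS : ℝ) ^ n * Metric.hausdorffDist K A) ∧
    ∀ᶠ n in atTop,
      Metric.hausdorffDist
        ((fun S => ⋃ j, (r ∘ φ j) '' Set.univ.pi (fun _ : Fin m => S))^[n] K) A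
        ≤ 2 * ε / (1 - αS) := by
  have hα1 : (αS : ℝ) < 1 := hαS
  have hbound : ∀ n, hausdorffDist ((hutchinson fun j => r ∘ φ j)^[n] K) A
      ≤ ε / (1 - αS) + (αS : ℝ) ^ n * hausdorffDist K A :=
    hausdorffDist_iterate_hutchinson_le αS.coe_nonneg hα1 hε.le
      (fun j => dist_comp_le_of_lipschitzWith (hφ j) hr_close) hAfix.symm
      hK hKfin.isCompact hA hAc
  refine ⟨hbound, ?_⟩
  filter_upwards [eventually_pow_mul_le αS.coe_nonneg hα1 (div_pos hε (sub_pos.2 hα1))]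
    with n hn
  calc _ ≤ ε / (1 - αS) + (αS : ℝ) ^ n * hausdorffDist K A := hbound n
    _ ≤ ε / (1 - αS) + ε / (1 - αS) := by gcongr
    _ = 2 * ε / (1 - αS) := by ring

/-- Discretization of the Hutchinson–Barnsley theorem for GIFSs: iterates of the
discretized generalized Hutchinson operator on any nonempty finite subset of a
proper `ε`-net approximate the attractor `A_S` with error
`ε/(1−α_S) + α_Sⁿ · h(K, A_S)`, and eventually with error `2ε/(1−α_S)`. -/
theorem stmt17 {X : Type*} [MetricSpace X] [CompleteSpace X]
    {m L : ℕ} (hm : 0 < m) (hL : 0 < L)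
    (φ : Fin L → (Fin m → X) → X) (αS : NNReal) (hαS : αS < 1)
    (hφ : ∀ j, LipschitzWith αS (φ j))
    (A : Set X) (hA : A.Nonempty) (hAc : IsCompact A)
    (hAfix : A = ⋃ j, φ j '' Set.univ.pi (fun _ : Fin m => A))
    (ε : ℝ) (hε : 0 < ε) (Xhat : Set X)
    (hnet : ∀ x : X, ∃ y ∈ Xhat, dist x y ≤ ε)
    (hproper : ∀ D : Set X, Bornology.IsBounded D → (D ∩ Xhat).Finite)
    (r : X → X) (hr_range : ∀ x, r x ∈ Xhat)
    (hr_id : ∀ x ∈ Xhat, r x = x)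
    (hr_close : ∀ x, dist x (r x) ≤ ε)
    (K : Set X) (hK : K.Nonempty) (hKfin : K.Finite) (hKsub : K ⊆ Xhat) :
    (∀ n : ℕ,
      Metric.hausdorffDist
        ((fun S => ⋃ j, (r ∘ φ j) '' Set.univ.pi (fun _ : Fin m => S))^[n] K) A
        ≤ ε / (1 - αS) + (αS : ℝ) ^ n * Metric.hausdorffDist K A) ∧
    ∀ᶠ n in atTop,
      Metric.hausdorffDist
        ((fun S => ⋃ j, (r ∘ φ j) '' Set.univ.pi (fun _ : Fin m => S))^[n] K) A
        ≤ 2 * ε / (1 - αS) :=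
  stmt17_general φ αS hαS hφ A hA hAc hAfix ε hε r hr_close K hK hKfin
end
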